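/- Let G be a group with a choice of generators w ↦ w̄ from W. Assume: (a) limsup_{n→∞} |V_n|^{1/n} = 2m, i.e., the gross cogrowth θ equals 1 (by the Grigorchuk–Kesten characterization, this says that G is amenable); (b) the set V = { w ∈ W : w̄ = 1 } is recursively enumerable, i.e., V is the domain of a partial computable function on W (this holds whenever G is finitely presented); (c) there is a partial computable function F from W to Bool whose domain D is exponentially generic, and which is correct on its domain: for every w ∈ D, F(w) is defined and F(w) = true if and only if w̄ = 1. Then the word problem of G is decidable: the predicate w ↦ (w̄ = 1) on W is computable. Equivalently: if G is a finitely presented amenable group with unsolvable word problem, then for any choice of generators the word problem in G is not solvable on any exponentially generic subset of W. -/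

import Mathlib

open Filter

namespace GenericSubgroups

/-- A word over the alphabet `Fin m × Bool` (generator index, with `true` = formal inverse). -/
abbrev Word (m : ℕ) := List (Fin m × Bool)

/-- The disk of radius `n` : words of length at most `n`. -/
def ball (m n : ℕ) : Set (Word m) := {w | w.length ≤ n}

/-- The sphere of radius `n` : words of length exactly `n`. -/
def sphere (m n : ℕ) : Set (Word m) := {w | w.length = n}

/-- A set of words is exponentially negligible. -/
def ExpNegligible {m : ℕ} (X : Set (Word m)) : Prop :=
  ∃ α : ℝ, 0 < α ∧ α < 1 ∧
    ∀ᶠ n in atTop, ((X ∩ ball m n).ncard : ℝ) / ((ball m n).ncard : ℝ) ≤ α ^ n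

/-- A set of words is exponentially generic if its complement is exponentially negligible. -/
def ExpGeneric {m : ℕ} (X : Set (Word m)) : Prop := ExpNegligible Xᶜ

/-- Disk of radius `n` in the set of `k`-tuples of words. -/
def ballK (m k n : ℕ) : Set (Fin k → Word m) := {w | ∀ i, (w i).length ≤ n}

def ExpNegligibleK {m k : ℕ} (X : Set (Fin k → Word m)) : Prop :=
  ∃ α : ℝ, 0 < α ∧ α < 1 ∧
    ∀ᶠ n in atTop, ((X ∩ ballK m k n).ncard : ℝ) / ((ballK m k n).ncard : ℝ) ≤ α ^ n

def ExpGenericK {m k : ℕ} (X : Set (Fin k → Word m)) : Prop := ExpNegligibleK Xᶜ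

variable {G : Type*} [Group G]

/-- Evaluation of a word in `G`, determined by the family `g` of generators. -/
def eval {m : ℕ} (g : Fin m → G) (w : Word m) : G :=
  (w.map (fun p => if p.2 then (g p.1)⁻¹ else g p.1)).prod

/-- Word length of an element of `G`. -/
noncomputable def wlen {m : ℕ} (g : Fin m → G) (x : G) : ℕ :=
  sInf {n | ∃ w : Word m, w.length = n ∧ eval g w = x}

/-- Word metric on `G`. -/
noncomputable def wdist {m : ℕ} (g : Fin m → G) (x y : G) : ℕ := wlen g (x⁻¹ * y)

/-- Words of length exactly `n` representing the identity. -/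
def V {m : ℕ} (g : Fin m → G) (n : ℕ) : Set (Word m) :=
  {w | w.length = n ∧ eval g w = 1}

/-- The gross cogrowth `θ = limsup (1/n) log_{2m} |V_n|`. -/
noncomputable def cogrowth {m : ℕ} (g : Fin m → G) : ℝ :=
  limsup (fun n : ℕ => Real.logb (2 * m : ℝ) ((V g n).ncard : ℝ) / (n : ℝ)) atTop

/-- The four-point (quadrilateral) condition with constant `δ` for the word metric. -/
def FourPoint {m : ℕ} (g : Fin m → G) (δ : ℝ) : Prop :=
  ∀ p q r s : G,
    (wdist g p s : ℝ) + (wdist g q r : ℝ) ≤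
      2 * δ + max ((wdist g p q : ℝ) + (wdist g r s : ℝ)) ((wdist g p r : ℝ) + (wdist g q s : ℝ))

/-- The Gromov product `(x|y)_1` with respect to the word metric. -/
noncomputable def gp {m : ℕ} (g : Fin m → G) (x y : G) : ℝ :=
  ((wlen g x : ℝ) + (wlen g y : ℝ) - (wlen g (x⁻¹ * y) : ℝ)) / 2

/-- `x^e` where `e : Bool`, `true` meaning inverse. -/
def powB (x : G) (e : Bool) : G := if e then x⁻¹ else x

/-- Formal inverse of a word. -/
def winv {m : ℕ} (w : Word m) : Word m := (w.reverse).map (fun p => (p.1, !p.2))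

/-!
`V` is r.e. by hypothesis, and so is its complement: `w̄ ≠ 1` iff some word `u` has
`F u = true` and `F (u ++ w) = false`. Indeed such a `u` is trivial, so `F` answers correctly on
`u ++ w`, which represents `w̄`. Conversely such a `u` exists for every `w`: when `θ = 1`, for every
`r < 2m` there are infinitely many `n` with `|V_n| > rⁿ`, while the words `u` of length at most `n`
for which `u` or `u ++ w` falls outside the exponentially generic domain of `F` number only
`O(βⁿ)` for some `β < 2m`.
-/

section Computability

open Encodable Nat.Partrec.Code

variable {α β σ : Type} [Primcodable α] [Primcodable β] [Primcodable σ]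

theorem _root_.REPred.comp {p : β → Prop} (hp : REPred p) {f : α → β} (hf : Computable f) :
    REPred fun a => p (f a) :=
  Partrec.comp hp hf

theorem _root_.REPred.and {p q : α → Prop} (hp : REPred p) (hq : REPred q) :
    REPred fun a => p a ∧ q a :=
  (Partrec.bind hp (hq.comp Computable.fst).to₂).dom_re.of_eq fun a => by
    simp [Part.assert]

theorem _root_.Partrec.mem_re [DecidableEq σ] {f : α →. σ} (hf : Partrec f) (b : σ) :
    REPred fun a => b ∈ f a := by
  have hb : Primrec fun x : α × σ => if x.2 = b then some () else Option.none :=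
    Primrec.ite (Primrec.eq.comp Primrec.snd (Primrec.const b)) (Primrec.const _)
      (Primrec.const _)
  refine (hf.bind (Computable.ofOption hb.to_comp).to₂).dom_re.of_eq fun a => ?_
  simp [Part.dom_iff_mem, eq_comm]

theorem _root_.REPred.exists {p : α → β → Prop} (hp : REPred fun x : α × β => p x.1 x.2) :
    REPred fun a => ∃ b, p a b := by
  obtain ⟨c, hc⟩ := Nat.Partrec.Code.exists_code.1 hp
  have hdom : ∀ a b, p a b ↔ ∃ k x, x ∈ evaln k c (encode (a, b)) := fun a b => by
    have hev : (Nat.Partrec.Code.eval c (encode (a, b))).Dom ↔ p a b := by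
      rw [hc]
      simp [Part.assert]
    rw [← hev, Part.dom_iff_mem, exists_comm]
    simp only [evaln_complete]
  -- dovetailing: `n` codes a candidate `b` together with a step bound `k`
  let test (a : α) (n : ℕ) : Option ℕ :=
    (decode (α := β) n.unpair.1).bind fun b => evaln n.unpair.2 c (encode (a, b))
  have htest : Computable₂ test :=
    (Primrec.option_bind
      (Primrec.decode.comp (Primrec.fst.comp (Primrec.unpair.comp Primrec.snd)))
      (primrec_evaln.comp (((Primrec.snd.comp (Primrec.unpair.comp (Primrec.snd.comp
        Primrec.fst))).pair (Primrec.const c)).pair (Primrec.encode.comp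
          ((Primrec.fst.comp Primrec.fst).pair Primrec.snd)))).to₂).to_comp
  refine (Partrec.rfindOpt htest).dom_re.of_eq fun a => ?_
  simp only [Nat.rfindOpt_dom, hdom]
  constructor
  · rintro ⟨n, x, hx⟩
    obtain ⟨b, -, hb⟩ := Option.mem_bind_iff.1 hx
    exact ⟨b, _, x, hb⟩
  · rintro ⟨b, k, x, hx⟩
    exact ⟨Nat.pair (encode b) k, x, by simpa [test] using hx⟩

theorem _root_.ComputablePred.of_partial_decider {P : List α → Prop}
    (hP : ∀ u w, P u → (P (u ++ w) ↔ P w)) (hre : REPred P) {F : List α →. Bool} (hF : Partrec F)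
    (hcorrect : ∀ w (h : (F w).Dom), ((F w).get h = true ↔ P w))
    (hcover : ∀ w, ∃ u, P u ∧ (F u).Dom ∧ (F (u ++ w)).Dom) : ComputablePred P := by
  have hmem : ∀ {w b}, b ∈ F w → (b = true ↔ P w) := by
    rintro w b ⟨h, rfl⟩
    exact hcorrect w h
  have hco : REPred fun w => ∃ u, true ∈ F u ∧ false ∈ F (u ++ w) :=
    REPred.exists <| ((hF.mem_re true).comp Computable.snd).and
      ((hF.mem_re false).comp (Computable.list_append.comp Computable.snd Computable.fst))
  refine ComputablePred.computable_iff_re_compl_re'.2 ⟨hre, hco.of_eq fun w => ⟨?_, fun hw => ?_⟩⟩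
  · rintro ⟨u, hu, huw⟩
    rw [← hP u w ((hmem hu).1 rfl), ← hmem huw]
    exact Bool.false_ne_true
  · obtain ⟨u, hu, hFu, hFuw⟩ := hcover w
    have hFuw_false : (F (u ++ w)).get hFuw = false :=
      Bool.eq_false_iff.2 fun h => hw ((hP u w hu).1 ((hcorrect _ hFuw).1 h))
    refine ⟨u, ?_, hFuw_false ▸ Part.get_mem hFuw⟩
    exact ((hcorrect u hFu).2 hu) ▸ Part.get_mem hFu

end Computability

lemma eval_append {m : ℕ} (g : Fin m → G) (u v : Word m) :
    eval g (u ++ v) = eval g u * eval g v := by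
  simp [eval]

section Counting

variable {m : ℕ}

lemma ball_finite (m n : ℕ) : (ball m n).Finite := List.finite_length_le _ n

lemma sphere_ncard (m n : ℕ) : (sphere m n).ncard = (2 * m) ^ n := by
  rw [← Nat.card_coe_set_eq, show Nat.card (sphere m n) = Nat.card (List.Vector (Fin m × Bool) n)
    from rfl, Nat.card_eq_fintype_card, card_vector, Fintype.card_prod, Fintype.card_fin,
    Fintype.card_bool, mul_comm]

lemma ball_ncard_pos (m n : ℕ) : 0 < (ball m n).ncard :=
  (Set.ncard_pos (ball_finite m n)).2 ⟨[], Nat.zero_le n⟩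

lemma ball_ncard_le (hm : 1 ≤ m) (n : ℕ) : (ball m n).ncard ≤ 2 * (2 * m) ^ n := by
  induction n with
  | zero => simp [ball, List.length_eq_zero_iff]
  | succ n ih =>
    have hsplit : ball m (n + 1) = ball m n ∪ sphere m (n + 1) := by
      ext w
      simp only [ball, sphere, Set.mem_ofPred_eq, Set.mem_union]
      omega
    calc (ball m (n + 1)).ncard ≤ (ball m n).ncard + (sphere m (n + 1)).ncard :=
          hsplit ▸ Set.ncard_union_le _ _
      _ ≤ 2 * (2 * m) ^ n + (2 * m) ^ (n + 1) := by rw [sphere_ncard]; omega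
      _ ≤ 2 * (2 * m) ^ (n + 1) := by rw [pow_succ]; nlinarith [Nat.zero_le ((2 * m) ^ n)]

lemma ExpNegligible.exists_ncard_inter_ball_le (hm : 1 ≤ m) {X : Set (Word m)}
    (hX : ExpNegligible X) :
    ∃ β : ℝ, 0 ≤ β ∧ β < 2 * m ∧ ∀ᶠ n in atTop, ((X ∩ ball m n).ncard : ℝ) ≤ 2 * β ^ n := by
  obtain ⟨α, hα0, hα1, hev⟩ := hX
  have hm' : (1 : ℝ) ≤ m := by exact_mod_cast hm
  refine ⟨α * (2 * m), by positivity, by nlinarith, hev.mono fun n hn => ?_⟩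
  rw [div_le_iff₀ (by exact_mod_cast ball_ncard_pos m n)] at hn
  calc ((X ∩ ball m n).ncard : ℝ) ≤ α ^ n * (ball m n).ncard := hn
    _ ≤ α ^ n * (2 * (2 * m) ^ n) := by
        gcongr
        exact_mod_cast ball_ncard_le hm n
    _ = 2 * (α * (2 * m)) ^ n := by ring

lemma ncard_preimage_append_inter_ball_le (X : Set (Word m)) (w : Word m) (n : ℕ) :
    ((· ++ w) ⁻¹' X ∩ ball m n).ncard ≤ (X ∩ ball m (n + w.length)).ncard := by
  refine Set.ncard_le_ncard_of_injOn (· ++ w) ?_ (fun u _ v _ h => List.append_left_injective w h)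
    ((ball_finite m _).inter_of_right _)
  rintro u ⟨hu, hlen⟩
  exact ⟨hu, by simpa [ball] using hlen⟩

lemma frequently_pow_lt_ncard_V (g : Fin m → G) (hθ : cogrowth g = 1)
    {r : ℝ} (hr1 : 1 ≤ r) (hr : r < 2 * m) : ∃ᶠ n in atTop, r ^ n < (V g n).ncard := by
  have hb : 1 < (2 * m : ℝ) := by linarith
  set t := Real.logb (2 * m) r
  have ht0 : 0 ≤ t := Real.logb_nonneg hb hr1
  have ht1 : t < 1 := by
    rw [← Real.logb_self_eq_one hb]
    exact Real.logb_lt_logb hb (by linarith) hr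
  have hnonneg : ∀ n : ℕ, 0 ≤ Real.logb (2 * m) ((V g n).ncard : ℝ) / n := fun n => by
    rcases Nat.eq_zero_or_pos (V g n).ncard with h | h
    · simp [h]
    · exact div_nonneg (Real.logb_nonneg hb (by exact_mod_cast h)) n.cast_nonneg
  refine (frequently_lt_of_lt_limsup (isCoboundedUnder_le_of_le atTop hnonneg)
    (hθ.symm ▸ ht1 : t < cogrowth g)).mono fun n hn => ?_
  -- `logb _ 0 = 0` and `x / 0 = 0`, so `0 ≤ t < …` rules out `n = 0` and `V g n = ∅`
  have hn0 : 0 < n := Nat.pos_of_ne_zero fun h => by simp [h] at hn; linarith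
  have hV : 0 < (V g n).ncard := Nat.pos_of_ne_zero fun h => by simp [h] at hn; linarith
  rwa [lt_div_iff₀ (by exact_mod_cast hn0), Real.lt_logb_iff_rpow_lt hb (by exact_mod_cast hV),
    Real.rpow_mul (by linarith), Real.rpow_logb (by linarith) hb.ne' (by linarith),
    Real.rpow_natCast] at hn

lemma exists_eval_eq_one_mem_and_append_mem (hm : 1 ≤ m) (g : Fin m → G) (hθ : cogrowth g = 1)
    {D : Set (Word m)} (hD : ExpGeneric D) (w : Word m) :
    ∃ u, eval g u = 1 ∧ u ∈ D ∧ u ++ w ∈ D := by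
  obtain ⟨β, hβ0, hβ, hev⟩ := ExpNegligible.exists_ncard_inter_ball_le hm hD
  have hm' : (1 : ℝ) ≤ m := by exact_mod_cast hm
  obtain ⟨r, hβr, hr1, hr⟩ : ∃ r : ℝ, β < r ∧ 1 ≤ r ∧ r < 2 * m :=
    ⟨(β + 2 * m) / 2, by linarith, by linarith, by linarith⟩
  set C := 2 + 2 * β ^ w.length
  have hsmall : ∀ᶠ n in atTop, C * β ^ n ≤ r ^ n := by
    have hC : 0 < C := by positivity
    filter_upwards [(isLittleO_pow_pow_of_lt_left hβ0 hβr).bound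
      (inv_pos.2 hC)] with n hn
    rw [Real.norm_of_nonneg (by positivity), Real.norm_of_nonneg (by positivity)] at hn
    rwa [← le_div_iff₀' hC, div_eq_inv_mul]
  obtain ⟨n, hVn, ⟨hn, hnL⟩, hCn⟩ := ((frequently_pow_lt_ncard_V g hθ hr1 hr).and_eventually
    ((hev.and ((tendsto_add_atTop_nat w.length).eventually hev)).and hsmall)).exists
  set bad := Dᶜ ∩ ball m n ∪ (· ++ w) ⁻¹' Dᶜ ∩ ball m n
  have hbad : bad.ncard < (V g n).ncard := by
    have : (bad.ncard : ℝ) ≤ C * β ^ n := calc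
      (bad.ncard : ℝ) ≤ (Dᶜ ∩ ball m n).ncard + (Dᶜ ∩ ball m (n + w.length)).ncard := by
          exact_mod_cast (Set.ncard_union_le _ _).trans
            (Nat.add_le_add_left (ncard_preimage_append_inter_ball_le _ w n) _)
      _ ≤ 2 * β ^ n + 2 * β ^ (n + w.length) := add_le_add hn hnL
      _ = C * β ^ n := by ring
    exact_mod_cast this.trans_lt (hCn.trans_lt hVn)
  obtain ⟨u, ⟨hlen, hu⟩, hubad⟩ := Set.exists_mem_notMem_of_ncard_lt_ncard hbad
    (((ball_finite m n).inter_of_right _).union ((ball_finite m n).inter_of_right _))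
  have hball : u ∈ ball m n := hlen.le
  simp only [bad, Set.mem_union, Set.mem_inter_iff, Set.mem_compl_iff, Set.mem_preimage] at hubad
  exact ⟨u, hu, by tauto, by tauto⟩

end Counting

theorem word_problem_not_generically_solvable_general (m : ℕ) (hm : 2 ≤ m) {G : Type*} [Group G]
    (g : Fin m → G)
    (hamen : cogrowth g = 1)
    (hre : ∃ E : Word m →. Unit, Partrec E ∧ ∀ w : Word m, (E w).Dom ↔ eval g w = 1)
    (F : Word m →. Bool) (hF : Partrec F)
    (hgen : ExpGeneric {w : Word m | (F w).Dom})
    (hcorrect : ∀ (w : Word m) (h : (F w).Dom), ((F w).get h = true ↔ eval g w = 1)) :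
    ComputablePred (fun w : Word m => eval g w = 1) := by
  obtain ⟨E, hE, hEdom⟩ := hre
  refine ComputablePred.of_partial_decider (fun u w hu => ?_) (hE.dom_re.of_eq hEdom) hF hcorrect
    fun w => exists_eval_eq_one_mem_and_append_mem (by omega) g hamen hgen w
  rw [eval_append, hu, one_mul]

/-- Theorem `generic`: if `G` is amenable (`θ = 1`), the word problem set
`V = {w : w̄ = 1}` is recursively enumerable (as in any finitely presented group), and
some correct partial algorithm for the word problem has exponentially generic domain,
then the word problem of `G` is decidable. Contrapositively: a finitely presented
amenable group with unsolvable word problem has word problem unsolvable on every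
exponentially generic set of words. -/
theorem word_problem_not_generically_solvable (m : ℕ) (hm : 2 ≤ m) {G : Type*} [Group G]
    (g : Fin m → G) (hsurj : Function.Surjective (eval g))
    (hamen : cogrowth g = 1)
    (hre : ∃ E : Word m →. Unit, Partrec E ∧ ∀ w : Word m, (E w).Dom ↔ eval g w = 1)
    (F : Word m →. Bool) (hF : Partrec F)
    (hgen : ExpGeneric {w : Word m | (F w).Dom})
    (hcorrect : ∀ (w : Word m) (h : (F w).Dom), ((F w).get h = true ↔ eval g w = 1)) :
    ComputablePred (fun w : Word m => eval g w = 1) :=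
  word_problem_not_generically_solvable_general m hm g hamen hre F hF hgen hcorrect

end GenericSubgroups
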